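/- arXiv:2306.09981 — 2 statements merged into one kernel-verified Lean document; each statement's English description precedes it below -/
import Mathlib

section
/- For all real x > 1, the tail sum over primes p > x of 1/(p(p-1)) is strictly less than (1/(x-1)) * (2B + 1/log x + 2/(log x)^2), where B is the Meissel–Mertens constant. -/
/-!
Primes `p > x ≥ M` lie in the `φ M` residue classes mod `M` coprime to `M`. Since `1 / (n (n - 1))`
is decreasing, its value at `n` is at most its average over `n - M < m ≤ n`; for distinct `n` of one
residue class these windows are disjoint, and the telescoping sum `∑_{m > N} 1 / (m (m - 1)) = 1 / N`
bounds the tail by `φ M / (M (x - M))`. Choosing `M = 1, 2, 6, 30` according to the size of `log x`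
gives the claim as soon as `B ≥ 0.14`. This lower bound comes from `γ > 1/2` together with
`-log (1 - 1/p) - 1/p ≤ 1 / (2 p (p - 1))` (that is, `log y ≤ sinh (log y)` at `y = p / (p - 1)`),
using the exact value at `p = 2` and the tail bound with `M = 2` for the primes `p > 7`.
-/

open Real

/-- The Meissel–Mertens constant `B = γ + ∑_p (log(1 - 1/p) + 1/p)`. -/
noncomputable def mertensB : ℝ :=
  Real.eulerMascheroniConstant +
    ∑' p : Nat.Primes, (Real.log (1 - 1 / ((p : ℕ) : ℝ)) + 1 / ((p : ℕ) : ℝ))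

open Finset
open scoped Nat

lemma one_div_mul_sub_one_le {m n : ℕ} (hm : 2 ≤ m) (hmn : m ≤ n) :
    1 / ((n : ℝ) * (n - 1)) ≤ 1 / ((m : ℝ) * (m - 1)) := by
  have hm' : (2 : ℝ) ≤ m := by exact_mod_cast hm
  have hmn' : (m : ℝ) ≤ n := by exact_mod_cast hmn
  exact one_div_le_one_div_of_le (mul_pos (by linarith) (by linarith))
    (mul_le_mul hmn' (by linarith) (by linarith) (by linarith))

lemma sum_Ico_one_div_mul_sub_one {N B : ℕ} (hN : 1 ≤ N) (hNB : N + 1 ≤ B) :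
    ∑ n ∈ Ico (N + 1) B, 1 / ((n : ℝ) * (n - 1)) = 1 / N - 1 / (B - 1) := by
  have hterm : ∀ n ∈ Ico (N + 1) B, 1 / ((n : ℝ) * (n - 1))
      = -1 / (((n + 1 : ℕ) : ℝ) - 1) - -1 / ((n : ℝ) - 1) := by
    intro n hn
    have : (2 : ℝ) ≤ n := by have := (mem_Ico.1 hn).1; exact_mod_cast (by omega : 2 ≤ n)
    have h1 : (n : ℝ) - 1 ≠ 0 := by linarith
    have h0 : (n : ℝ) ≠ 0 := by linarith
    rw [Nat.cast_succ, add_sub_cancel_right]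
    field_simp
    ring
  rw [sum_congr rfl hterm, sum_Ico_sub (fun n : ℕ => -1 / ((n : ℝ) - 1)) hNB]
  push_cast
  ring

lemma sum_one_div_mul_sub_one_le {N : ℕ} (hN : 1 ≤ N) {s : Finset ℕ} (hs : ∀ n ∈ s, N < n) :
    ∑ n ∈ s, 1 / ((n : ℝ) * (n - 1)) ≤ 1 / N := by
  set B := max (s.sup id + 1) (N + 1)
  have hsub : s ⊆ Ico (N + 1) B := fun n hn =>
    mem_Ico.2 ⟨hs n hn, by have := le_sup (f := id) hn; simp only [id] at this; omega⟩
  have hB : (N : ℝ) + 1 ≤ B := by exact_mod_cast le_max_right _ _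
  calc ∑ n ∈ s, 1 / ((n : ℝ) * (n - 1))
      ≤ ∑ n ∈ Ico (N + 1) B, 1 / ((n : ℝ) * (n - 1)) :=
        sum_le_sum_of_subset_of_nonneg hsub fun n hn _ => by
          have : (2 : ℝ) ≤ n := by have := (mem_Ico.1 hn).1; exact_mod_cast (by omega : 2 ≤ n)
          exact one_div_nonneg.2 (mul_nonneg (by linarith) (by linarith))
    _ = 1 / N - 1 / (B - 1) := sum_Ico_one_div_mul_sub_one hN (le_max_right _ _)
    _ ≤ 1 / N := by
        have : 0 ≤ 1 / ((B : ℝ) - 1) := by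
          have : (1 : ℝ) ≤ N := by exact_mod_cast hN
          apply one_div_nonneg.2; linarith
        linarith

lemma sum_one_div_mul_sub_one_le_of_mod_eq {M N c : ℕ} (hM : 0 < M) (hN : 1 ≤ N)
    {s : Finset ℕ} (hs : ∀ n ∈ s, n % M = c ∧ N + M ≤ n) :
    ∑ n ∈ s, 1 / ((n : ℝ) * (n - 1)) ≤ 1 / (M * N) := by
  set f : ℕ → ℝ := fun n => 1 / ((n : ℝ) * (n - 1))
  have hinj : Set.InjOn (fun q : ℕ × ℕ => q.1 - q.2) ↑(s ×ˢ range M) := by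
    rintro ⟨n, i⟩ hni ⟨n', i'⟩ hni' hdiff
    simp only [coe_product, coe_range, Set.mem_prod, mem_coe, Set.mem_Iio] at hni hni' hdiff
    have hmod : (n - i) + i ≡ (n - i) + i' [MOD M] := by
      rw [Nat.sub_add_cancel (by have := (hs n hni.1).2; omega), hdiff,
        Nat.sub_add_cancel (by have := (hs n' hni'.1).2; omega)]
      exact (hs n hni.1).1.trans (hs n' hni'.1).1.symm
    have hi : i = i' := (Nat.ModEq.add_left_cancel' _ hmod).eq_of_lt_of_lt hni.2 hni'.2
    have := (hs n hni.1).2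
    have := (hs n' hni'.1).2
    subst hi
    exact Prod.ext (by omega) rfl
  have hwindow : (M : ℝ) * ∑ n ∈ s, f n ≤ ∑ q ∈ s ×ˢ range M, f (q.1 - q.2) := by
    rw [mul_sum, sum_product]
    refine sum_le_sum fun n hn => ?_
    rw [show (M : ℝ) * f n = ∑ _i ∈ range M, f n by simp]
    refine sum_le_sum fun i hi => ?_
    have := (hs n hn).2
    exact one_div_mul_sub_one_le (by have := mem_range.1 hi; omega) (Nat.sub_le n i)
  have hshifted : ∑ q ∈ s ×ˢ range M, f (q.1 - q.2) ≤ 1 / N := by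
    rw [← sum_image hinj]
    refine sum_one_div_mul_sub_one_le hN fun m hm => ?_
    obtain ⟨⟨n, i⟩, hni, rfl⟩ := mem_image.1 hm
    have := (hs n (mem_product.1 hni).1).2
    have := mem_range.1 (mem_product.1 hni).2
    simp only
    omega
  have hM' : (0 : ℝ) < M := by exact_mod_cast hM
  rw [mul_comm (M : ℝ), ← div_div, le_div_iff₀ hM', mul_comm]
  exact hwindow.trans hshifted

lemma sum_one_div_mul_sub_one_le_of_mod_mem {M N : ℕ} (hM : 0 < M) (hN : 1 ≤ N) (C : Finset ℕ)
    {s : Finset ℕ} (hs : ∀ n ∈ s, n % M ∈ C ∧ N + M ≤ n) :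
    ∑ n ∈ s, 1 / ((n : ℝ) * (n - 1)) ≤ #C / (M * N) := by
  rw [← sum_fiberwise_of_maps_to fun n hn => (hs n hn).1]
  calc ∑ c ∈ C, ∑ n ∈ s with n % M = c, 1 / ((n : ℝ) * (n - 1))
      ≤ ∑ _c ∈ C, 1 / ((M : ℝ) * N) := sum_le_sum fun c _ =>
        sum_one_div_mul_sub_one_le_of_mod_eq hM hN fun n hn =>
          ⟨(mem_filter.1 hn).2, (hs n (mem_filter.1 hn).1).2⟩
    _ = #C / (M * N) := by rw [sum_const, nsmul_eq_mul, mul_one_div]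

lemma coprime_mod_of_prime {p M : ℕ} (hp : p.Prime) (hM : 0 < M) (hMp : M < p) :
    M.Coprime (p % M) := by
  have : p.Coprime M := (hp.coprime_iff_not_dvd).2 fun h => (Nat.le_of_dvd hM h).not_gt hMp
  rw [Nat.Coprime, Nat.gcd_comm, ← Nat.gcd_rec]
  exact this.symm

lemma sum_primes_one_div_mul_sub_one_le {x : ℝ} {M : ℕ} (hM : 0 < M) (hMx : M ≤ ⌊x⌋₊)
    {s : Finset ℕ} (hs : ∀ p ∈ s, p.Prime ∧ x < p) :
    ∑ p ∈ s, 1 / ((p : ℝ) * (p - 1)) ≤ φ M / (M * (⌊x⌋₊ + 1 - M)) := by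
  have hfloor : ∀ p ∈ s, ⌊x⌋₊ < p := fun p hp =>
    (Nat.floor_lt' (hs p hp).1.ne_zero).2 (hs p hp).2
  have key := sum_one_div_mul_sub_one_le_of_mod_mem hM (N := ⌊x⌋₊ + 1 - M) (by omega)
    {a ∈ range M | M.Coprime a} (s := s) fun p hp => by
      have := hfloor p hp
      exact ⟨mem_filter.2 ⟨mem_range.2 (Nat.mod_lt p hM),
        coprime_mod_of_prime (hs p hp).1 hM (by omega)⟩, by omega⟩
  rwa [← Nat.totient_eq_card_coprime, Nat.cast_sub (by omega), Nat.cast_add_one] at key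

lemma tsum_primes_gt_one_div_mul_sub_one_lt {x : ℝ} {M : ℕ} (hM : 0 < M) (hMx : (M : ℝ) < x) :
    (∑' p : Nat.Primes, if x < ((p : ℕ) : ℝ) then
        1 / (((p : ℕ) : ℝ) * (((p : ℕ) : ℝ) - 1)) else 0) < φ M / (M * (x - M)) := by
  have hMx' : M ≤ ⌊x⌋₊ := Nat.le_floor hMx.le
  have hM' : (0 : ℝ) < M := by exact_mod_cast hM
  have hφ : (0 : ℝ) < φ M := by exact_mod_cast Nat.totient_pos.2 hM
  have hfloor : x < ⌊x⌋₊ + 1 := Nat.lt_floor_add_one x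
  have hN : (0 : ℝ) < ⌊x⌋₊ + 1 - M := by linarith
  calc _ ≤ (φ M : ℝ) / (M * (⌊x⌋₊ + 1 - M)) := tsum_le_of_sum_le' (by positivity) fun u => ?_
    _ < φ M / (M * (x - M)) := by gcongr
  rw [← sum_filter]
  refine (sum_map _ ⟨_, Nat.Primes.coe_nat_injective⟩
    fun n : ℕ => 1 / ((n : ℝ) * (n - 1))).symm.trans_le ?_
  refine sum_primes_one_div_mul_sub_one_le hM hMx' fun p hp => ?_
  obtain ⟨q, hq, rfl⟩ := mem_map.1 hp
  exact ⟨q.2, (mem_filter.1 hq).2⟩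

lemma neg_log_one_sub_inv_add_inv_nonneg {t : ℝ} (ht : 1 < t) :
    0 ≤ -(log (1 - 1 / t) + 1 / t) := by
  have : 0 < 1 - 1 / t := by rw [sub_pos, div_lt_one (by linarith)]; exact ht
  linarith [log_le_sub_one_of_pos this]

lemma neg_log_one_sub_inv_add_inv_le {t : ℝ} (ht : 1 < t) :
    -(log (1 - 1 / t) + 1 / t) ≤ 1 / (t * (t - 1)) / 2 := by
  have ht0 : 0 < t - 1 := by linarith
  have hy : 0 < t / (t - 1) := by positivity
  have hsinh := self_le_sinh_iff.2 (log_nonneg ((one_le_div ht0).2 (by linarith : t - 1 ≤ t)))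
  rw [sinh_log hy] at hsinh
  have hlog : log (1 - 1 / t) = -log (t / (t - 1)) := by
    rw [← log_inv, inv_div, one_sub_div (by linarith)]
  have hid : (t / (t - 1) - (t / (t - 1))⁻¹) / 2 - 1 / t = 1 / (t * (t - 1)) / 2 := by
    field_simp
    ring
  linarith

lemma sum_primes_neg_log_one_sub_inv_add_inv_le {T : Finset ℕ} (hT : ∀ n ∈ T, n.Prime) :
    ∑ n ∈ T, -(log (1 - 1 / (n : ℝ)) + 1 / (n : ℝ)) ≤ 0.36 := by
  set h : ℕ → ℝ := fun n => -(log (1 - 1 / (n : ℝ)) + 1 / (n : ℝ))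
  have hT1 : ∀ n ∈ T, (1 : ℝ) < n := fun n hn => by exact_mod_cast (hT n hn).one_lt
  have hsmall : ∑ n ∈ T with n ≤ 7, h n ≤ ∑ n ∈ {2, 3, 5, 7}, h n := by
    refine sum_le_sum_of_subset_of_nonneg (fun n hn => ?_) fun n hn _ => ?_
    · obtain ⟨hnT, hn7⟩ := mem_filter.1 hn
      have hp := hT n hnT
      interval_cases n <;> simp_all +decide
    · simp only [mem_insert, mem_singleton] at hn
      rcases hn with rfl | rfl | rfl | rfl <;>
        exact neg_log_one_sub_inv_add_inv_nonneg (by norm_num)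
  have hvalues : ∑ n ∈ {2, 3, 5, 7}, h n ≤ log 2 - 1 / 2 + (1 / 6 + 1 / 20 + 1 / 42) / 2 := by
    have h2 : h 2 = log 2 - 1 / 2 := by
      simp only [h]
      rw [show (1 : ℝ) - 1 / (2 : ℕ) = 2⁻¹ by norm_num, log_inv]
      push_cast
      ring
    have h3 : h 3 ≤ 1 / ((3 : ℕ) * ((3 : ℕ) - 1)) / 2 :=
      neg_log_one_sub_inv_add_inv_le (by norm_num)
    have h5 : h 5 ≤ 1 / ((5 : ℕ) * ((5 : ℕ) - 1)) / 2 :=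
      neg_log_one_sub_inv_add_inv_le (by norm_num)
    have h7 : h 7 ≤ 1 / ((7 : ℕ) * ((7 : ℕ) - 1)) / 2 :=
      neg_log_one_sub_inv_add_inv_le (by norm_num)
    rw [sum_insert (by decide), sum_insert (by decide), sum_insert (by decide), sum_singleton, h2]
    norm_num at h3 h5 h7
    linarith
  have hlarge : ∑ n ∈ T with ¬n ≤ 7, h n ≤ 1 / 12 / 2 := by
    calc ∑ n ∈ T with ¬n ≤ 7, h n
        ≤ ∑ n ∈ T with ¬n ≤ 7, 1 / ((n : ℝ) * (n - 1)) / 2 :=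
          sum_le_sum fun n hn => neg_log_one_sub_inv_add_inv_le (hT1 n (mem_filter.1 hn).1)
      _ = (∑ n ∈ T with ¬n ≤ 7, 1 / ((n : ℝ) * (n - 1))) / 2 := (sum_div ..).symm
      _ ≤ φ 2 / (2 * (⌊(7 : ℝ)⌋₊ + 1 - 2)) / 2 := by
          gcongr
          refine sum_primes_one_div_mul_sub_one_le (by norm_num) (by norm_num) fun n hn => ?_
          obtain ⟨hnT, hn7⟩ := mem_filter.1 hn
          exact ⟨hT n hnT, by exact_mod_cast (by omega : 7 < n)⟩
      _ = 1 / 12 / 2 := by norm_num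
  rw [← sum_filter_add_sum_filter_not T (· ≤ 7)]
  linarith [log_two_lt_d9]

lemma mertensB_ge_d2 : 0.14 ≤ mertensB := by
  have h : ∑' p : Nat.Primes, -(log (1 - 1 / ((p : ℕ) : ℝ)) + 1 / ((p : ℕ) : ℝ)) ≤ 0.36 :=
    tsum_le_of_sum_le' (by norm_num) fun u =>
      (sum_map u ⟨_, Nat.Primes.coe_nat_injective⟩ _).symm.trans_le <|
        sum_primes_neg_log_one_sub_inv_add_inv_le fun n hn => by
          obtain ⟨p, -, rfl⟩ := mem_map.1 hn
          exact p.2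
  rw [tsum_neg] at h
  rw [mertensB]
  linarith [one_half_lt_eulerMascheroniConstant]

-- `m (x - m) r - c (x - 1)` is affine in `x`: nonnegative at `x₀`, with slope `m r - c ≥ 0`.
lemma div_mul_sub_le_one_div_sub_one_mul {c m x x₀ r R : ℝ} (hm : 1 ≤ m) (hmx : m < x)
    (hx₀ : x₀ ≤ x) (hslope : c ≤ m * r) (hbase : c * (x₀ - 1) ≤ m * (x₀ - m) * r)
    (hr : r ≤ R) : c / (m * (x - m)) ≤ 1 / (x - 1) * R := by
  have hxm : 0 < x - m := by linarith
  have hgrow : 0 ≤ (x - x₀) * (m * r - c) := mul_nonneg (by linarith) (by linarith)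
  have hR : 0 ≤ m * (x - m) * (R - r) := mul_nonneg (by positivity) (by linarith)
  rw [div_le_iff₀ (by positivity), one_div_mul_eq_div, div_mul_eq_mul_div, le_div_iff₀ (by linarith)]
  nlinarith

lemma pow_lt_of_natCast_lt_log {x : ℝ} {k : ℕ} (hx : 0 < x) (hk : (k : ℝ) < log x) :
    (2.718 : ℝ) ^ k < x :=
  calc (2.718 : ℝ) ^ k ≤ exp 1 ^ k := by gcongr; linarith [exp_one_gt_d9]
    _ = exp k := by rw [← exp_nat_mul, mul_one]
    _ < x := (lt_log_iff_exp_lt hx).1 hk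

lemma exists_totient_div_le {x : ℝ} (hx : 1 < x) {B : ℝ} (hB : 0.14 ≤ B) :
    ∃ M : ℕ, 0 < M ∧ (M : ℝ) < x ∧
      (φ M : ℝ) / (M * (x - M)) ≤ 1 / (x - 1) * (2 * B + 1 / log x + 2 / log x ^ 2) := by
  have hL : 0 < log x := log_pos hx
  have hR : ∀ k, log x ≤ k → 2 * 0.14 + (1 / k + 2 / k ^ 2) ≤ 2 * B + 1 / log x + 2 / log x ^ 2 :=
    fun k hk => by
      have : 1 / k ≤ 1 / log x := one_div_le_one_div_of_le hL hk
      have : 2 / k ^ 2 ≤ 2 / log x ^ 2 := by gcongr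
      linarith
  have hmodulus : ∀ (M k₀ : ℕ) (r : ℝ), 1 ≤ M → (M : ℝ) < 2.718 ^ k₀ → (k₀ : ℝ) < log x →
      (φ M : ℝ) ≤ M * r → φ M * (2.718 ^ k₀ - 1) ≤ M * (2.718 ^ k₀ - M) * r →
      r ≤ 2 * B + 1 / log x + 2 / log x ^ 2 → ∃ M : ℕ, 0 < M ∧ (M : ℝ) < x ∧
        (φ M : ℝ) / (M * (x - M)) ≤ 1 / (x - 1) * (2 * B + 1 / log x + 2 / log x ^ 2) :=
    fun M k₀ r hM hMk₀ hk₀ hslope hbase hr =>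
      have hMx : (M : ℝ) < x := hMk₀.trans (pow_lt_of_natCast_lt_log (by linarith) hk₀)
      ⟨M, hM, hMx, div_mul_sub_le_one_div_sub_one_mul (by exact_mod_cast hM) hMx
        (pow_lt_of_natCast_lt_log (by linarith) hk₀).le hslope hbase hr⟩
  rcases le_or_gt (log x) 2 with h2 | h2
  · refine ⟨1, one_pos, by simpa using hx, ?_⟩
    exact div_mul_sub_le_one_div_sub_one_mul (x₀ := 1) (by simp) (by simpa using hx) hx.le
      (by norm_num) (by norm_num) (hR 2 h2)
  rcases le_or_gt (log x) 4 with h4 | h4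
  · exact hmodulus 2 2 _ (by norm_num) (by norm_num) (by exact_mod_cast h2) (by norm_num)
      (by norm_num) (hR 4 h4)
  rcases le_or_gt (log x) 7 with h7 | h7
  · exact hmodulus 6 4 _ (by norm_num) (by norm_num) (by exact_mod_cast h4)
      (by rw [show φ 6 = 2 by decide]; norm_num) (by rw [show φ 6 = 2 by decide]; norm_num)
      (hR 7 h7)
  · have : 0 ≤ 1 / log x + 2 / log x ^ 2 := by positivity
    exact hmodulus 30 7 (2 * 0.14) (by norm_num) (by norm_num) (by exact_mod_cast h7)
      (by rw [show φ 30 = 8 by decide]; norm_num) (by rw [show φ 30 = 8 by decide]; norm_num)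
      (by linarith)

theorem tail_sum_one_div_p_p_sub_one (x : ℝ) (hx : 1 < x) :
    (∑' p : Nat.Primes, if x < ((p : ℕ) : ℝ) then
        1 / (((p : ℕ) : ℝ) * (((p : ℕ) : ℝ) - 1)) else 0)
      < (1 / (x - 1)) * (2 * mertensB + 1 / Real.log x + 2 / (Real.log x) ^ 2) := by
  obtain ⟨M, hM, hMx, hle⟩ := exists_totient_div_le hx mertensB_ge_d2
  exact (tsum_primes_gt_one_div_mul_sub_one_lt hM hMx).trans_le hle
end

section
/- For every integer n ≥ 3, Euler's totient function satisfies φ(n) > (log 2 / 2) · n / log n. -/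
/-!
Euler's product gives `φ n / n = ∏_{p ∣ n} (1 - 1/p)`. If `n` has `ω` prime factors, the `k`-th
smallest of them is at least `k + 1`, so the product is at least
`∏_{k=1}^{ω} k/(k+1) = 1/(ω + 1)`. On the other hand `2 ^ ω ≤ n`, so
`(ω + 1) log 2 ≤ log n + log 2 < 2 log n` once `n ≥ 3`.
-/

open Finset
open scoped Nat

theorem Finset.inv_card_add_one_le_prod_one_sub_inv {K : Type*} [Field K] [LinearOrder K]
    [IsStrictOrderedRing K] (S : Finset ℕ) (hS : ∀ p ∈ S, 2 ≤ p) :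
    ((#S : K) + 1)⁻¹ ≤ ∏ p ∈ S, (1 - (p : K)⁻¹) := by
  induction S using Finset.induction_on_max with
  | empty => simp
  | insert a s hlt ih =>
    have ha : a ∉ s := fun h => (hlt a h).false
    have ha2 : 2 ≤ a := hS a (mem_insert_self a s)
    have hcard : #s + 2 ≤ a := by
      have : #s ≤ #(Ico 2 a) := card_le_card fun p hp =>
        mem_Ico.mpr ⟨hS p (mem_insert_of_mem hp), hlt p hp⟩
      rw [Nat.card_Ico] at this
      omega
    have hcardK : (#s : K) + 2 ≤ a := by exact_mod_cast hcard
    have ha1 : (a : K)⁻¹ ≤ 1 := inv_le_one_of_one_le₀ (by exact_mod_cast (by omega : 1 ≤ a))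
    rw [prod_insert ha, card_insert_of_notMem ha, Nat.cast_succ]
    calc ((#s : K) + 1 + 1)⁻¹ = (1 - ((#s : K) + 2)⁻¹) * ((#s : K) + 1)⁻¹ := by
          field_simp; ring
      _ ≤ (1 - (a : K)⁻¹) * ∏ p ∈ s, (1 - (p : K)⁻¹) := by
          refine mul_le_mul ?_ (ih fun p hp => hS p (mem_insert_of_mem hp)) (by positivity)
            (sub_nonneg.mpr ha1)
          gcongr

theorem Nat.le_totient_mul_card_primeFactors_add_one (n : ℕ) :
    n ≤ φ n * (#n.primeFactors + 1) := by
  have hprod : ((#n.primeFactors : ℚ) + 1)⁻¹ ≤ ∏ p ∈ n.primeFactors, (1 - (p : ℚ)⁻¹) :=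
    inv_card_add_one_le_prod_one_sub_inv _ fun _ hp => (Nat.prime_of_mem_primeFactors hp).two_le
  have : (n : ℚ) ≤ φ n * (#n.primeFactors + 1) := by
    rw [← div_le_iff₀ (by positivity), div_eq_mul_inv, Nat.totient_eq_mul_prod_factors]
    exact mul_le_mul_of_nonneg_left hprod n.cast_nonneg
  exact_mod_cast this

theorem Nat.two_pow_card_primeFactors_le {n : ℕ} (hn : n ≠ 0) : 2 ^ #n.primeFactors ≤ n :=
  calc 2 ^ #n.primeFactors ≤ ∏ p ∈ n.primeFactors, p :=
        pow_card_le_prod _ _ _ fun _ hp => (Nat.prime_of_mem_primeFactors hp).two_le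
    _ ≤ n := Nat.le_of_dvd (Nat.pos_of_ne_zero hn) (Nat.prod_primeFactors_dvd n)

theorem totient_gt_log_two_div_two (n : ℕ) (hn : 3 ≤ n) :
    (Real.log 2 / 2) * n / Real.log n < (Nat.totient n : ℝ) := by
  set ω := #n.primeFactors
  have hcover : (n : ℝ) ≤ φ n * (ω + 1) := by
    exact_mod_cast Nat.le_totient_mul_card_primeFactors_add_one n
  have hω : ω * Real.log 2 ≤ Real.log n := by
    rw [← Real.log_pow]
    exact Real.log_le_log (by positivity)
      (by exact_mod_cast Nat.two_pow_card_primeFactors_le (by omega))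
  have hlog2 : Real.log 2 < Real.log n :=
    Real.log_lt_log two_pos (by exact_mod_cast (by omega : 2 < n))
  rw [div_lt_iff₀ ((Real.log_pos one_lt_two).trans hlog2)]
  calc Real.log 2 / 2 * n ≤ Real.log 2 / 2 * (φ n * (ω + 1)) := by gcongr
    _ = φ n * (ω * Real.log 2 + Real.log 2) / 2 := by ring
    _ < φ n * (Real.log n + Real.log n) / 2 := by
        gcongr φ n * ?_ / 2
        exact add_lt_add_of_le_of_lt hω hlog2
    _ = φ n * Real.log n := by ring
end
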